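/- arXiv:1612.08234 — 2 statements merged into one kernel-verified Lean document; each statement's English description precedes it below -/
import Mathlib

section
/- Every graph G with at least one edge has a minimum mixed dominating set S such that the edges of S form a matching (no two edges in S ∩ E share an endpoint). -/
open SimpleGraph

/-- The ground set of a graph: all vertices and all edges, as elements of `V ⊕ Sym2 V`. -/
def Ground {V : Type*} (G : SimpleGraph V) : Set (V ⊕ Sym2 V) :=
  Set.range Sum.inl ∪ Sum.inr '' G.edgeSet

/-- Mixed domination relation: `MixedDom G s x` means element `s` dominates element `x`:
a vertex dominates its neighbors and incident edges; an edge dominates its endpoints and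
adjacent edges. -/
def MixedDom {V : Type*} (G : SimpleGraph V) : (V ⊕ Sym2 V) → (V ⊕ Sym2 V) → Prop
  | Sum.inl v, Sum.inl u => G.Adj v u
  | Sum.inl v, Sum.inr e => e ∈ G.edgeSet ∧ v ∈ e
  | Sum.inr e, Sum.inl v => e ∈ G.edgeSet ∧ v ∈ e
  | Sum.inr e, Sum.inr f => e ∈ G.edgeSet ∧ f ∈ G.edgeSet ∧ e ≠ f ∧ ∃ v, v ∈ e ∧ v ∈ f

/-- `S` is a mixed dominating set of `G`: `S ⊆ V ∪ E` and every element of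
`(V ∪ E) \ S` is dominated by an element of `S`. -/
def IsMDS {V : Type*} (G : SimpleGraph V) (S : Set (V ⊕ Sym2 V)) : Prop :=
  S ⊆ Ground G ∧ ∀ x ∈ Ground G \ S, ∃ s ∈ S, MixedDom G s x

/-- The mixed domination number: minimum cardinality of a mixed dominating set. -/
noncomputable def gammaM {V : Type*} (G : SimpleGraph V) : ℕ :=
  sInf {n | ∃ S : Set (V ⊕ Sym2 V), IsMDS G S ∧ S.ncard = n}

lemma ground_isMDS {V : Type*} (G : SimpleGraph V) : IsMDS G (Ground G) :=
  ⟨subset_rfl, fun _ hx => (hx.2 hx.1).elim⟩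

lemma inr_mem_ground {V : Type*} {G : SimpleGraph V} {e : Sym2 V}
    (h : Sum.inr e ∈ Ground G) : e ∈ G.edgeSet := by
  rcases h with ⟨v, hv⟩ | ⟨g, hg, hge⟩
  · exact (Sum.inl_ne_inr hv).elim
  · obtain rfl := Sum.inr.inj hge; exact hg

/-- Every graph with at least one edge has a minimum mixed dominating set whose edges form
a matching. -/
theorem stmt_14 {V : Type*} [Fintype V] [DecidableEq V] (G : SimpleGraph V)
    (he : G.edgeSet.Nonempty) :
    ∃ S : Set (V ⊕ Sym2 V), IsMDS G S ∧ S.ncard = gammaM G ∧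
      ∀ e f : Sym2 V, Sum.inr e ∈ S → Sum.inr f ∈ S → e ≠ f →
        ∀ w : V, ¬(w ∈ e ∧ w ∈ f) := by
  classical
  set A : Set ℕ := {n | ∃ S : Set (V ⊕ Sym2 V), IsMDS G S ∧ S.ncard = n} with hA
  have hγA : gammaM G ∈ A := by
    apply Nat.sInf_mem
    exact ⟨(Ground G).ncard, Ground G, ground_isMDS G, rfl⟩
  set B : Set ℕ := {k | ∃ S : Set (V ⊕ Sym2 V), IsMDS G S ∧ S.ncard = gammaM G ∧
    (S ∩ Set.range Sum.inr).ncard = k} with hB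
  have hBne : B.Nonempty := by
    obtain ⟨S, hS, hc⟩ := hγA
    exact ⟨_, S, hS, hc, rfl⟩
  obtain ⟨S, hS, hcard, hedge⟩ := Nat.sInf_mem hBne
  refine ⟨S, hS, hcard, ?_⟩
  by_contra hcon
  push_neg at hcon
  obtain ⟨e, f, heS, hfS, hef, w, hwe, hwf⟩ := hcon
  have heE : e ∈ G.edgeSet := inr_mem_ground (hS.1 heS)
  have hfE : f ∈ G.edgeSet := inr_mem_ground (hS.1 hfS)
  set b : V := Sym2.Mem.other hwf with hbdef
  have hb : s(w, b) = f := Sym2.other_spec hwf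
  have hbf : b ∈ f := Sym2.other_mem hwf
  set S' : Set (V ⊕ Sym2 V) := insert (Sum.inl b) (S \ {Sum.inr f}) with hS'def
  have heS' : Sum.inr e ∈ S' :=
    Set.mem_insert_iff.2 (Or.inr ⟨heS, fun h => hef (Sum.inr.inj h)⟩)
  have hS' : IsMDS G S' := by
    constructor
    · intro x hx
      rcases Set.mem_insert_iff.1 hx with rfl | hx
      · exact Or.inl ⟨b, rfl⟩
      · exact hS.1 hx.1
    · intro x hx
      by_cases hxf : x = Sum.inr f
      · subst hxf
        exact ⟨Sum.inr e, heS', ⟨heE, hfE, hef, w, hwe, hwf⟩⟩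
      · have hxS : x ∉ S := by
          intro h
          exact hx.2 (Set.mem_insert_iff.2 (Or.inr ⟨h, hxf⟩))
        obtain ⟨s, hsS, hdom⟩ := hS.2 x ⟨hx.1, hxS⟩
        by_cases hsf : s = Sum.inr f
        · subst hsf
          match x with
          | Sum.inl v =>
            obtain ⟨_, hvf⟩ := hdom
            rw [← hb] at hvf
            rcases Sym2.mem_iff.1 hvf with rfl | rfl
            · exact ⟨Sum.inr e, heS', ⟨heE, hwe⟩⟩
            · exact (hx.2 (Set.mem_insert _ _)).elim
          | Sum.inr g =>
            obtain ⟨_, hgE, hfg, v, hvf, hvg⟩ := hdom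
            rw [← hb] at hvf
            rcases Sym2.mem_iff.1 hvf with rfl | rfl
            · have hge : e ≠ g := fun h => hxS (h ▸ heS)
              exact ⟨Sum.inr e, heS', ⟨heE, hgE, hge, v, hwe, hvg⟩⟩
            · exact ⟨Sum.inl b, Set.mem_insert _ _, ⟨hgE, hvg⟩⟩
        · exact ⟨s, Set.mem_insert_iff.2 (Or.inr ⟨hsS, hsf⟩), hdom⟩
  have hSpos : 0 < S.ncard := (Set.ncard_pos (Set.toFinite S)).2 ⟨_, hfS⟩
  have hle : S'.ncard ≤ S.ncard := by
    calc S'.ncard ≤ (S \ {Sum.inr f}).ncard + 1 := Set.ncard_insert_le _ _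
      _ = S.ncard - 1 + 1 := by rw [Set.ncard_diff_singleton_of_mem hfS]
      _ = S.ncard := Nat.succ_pred_eq_of_pos hSpos
  have hγle : gammaM G ≤ S'.ncard := Nat.sInf_le ⟨S', hS', rfl⟩
  have hS'card : S'.ncard = gammaM G := le_antisymm (hcard ▸ hle) hγle
  have hkey : S' ∩ Set.range Sum.inr = (S ∩ Set.range Sum.inr) \ {Sum.inr f} := by
    ext x
    simp only [hS'def, Set.mem_inter_iff, Set.mem_insert_iff, Set.mem_diff,
      Set.mem_singleton_iff, Set.mem_range]
    constructor
    · rintro ⟨rfl | ⟨hxS, hxf⟩, hy⟩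
      · obtain ⟨y, hy⟩ := hy; exact (Sum.inl_ne_inr hy.symm).elim
      · exact ⟨⟨hxS, hy⟩, hxf⟩
    · rintro ⟨⟨hxS, hy⟩, hxf⟩
      exact ⟨Or.inr ⟨hxS, hxf⟩, hy⟩
  have hlt : (S' ∩ Set.range Sum.inr).ncard < (S ∩ Set.range Sum.inr).ncard := by
    rw [hkey]
    exact Set.ncard_diff_singleton_lt_of_mem ⟨hfS, ⟨f, rfl⟩⟩ (Set.toFinite _)
  have hBmem : (S' ∩ Set.range Sum.inr).ncard ∈ B := ⟨S', hS', hS'card, rfl⟩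
  have := Nat.sInf_le hBmem
  omega
end

section
/- Every graph G has a minimum mixed dominating set S such that no vertex in S ∩ V is an endpoint of an edge in S ∩ E. -/
open SimpleGraph

/-! Among the minimum mixed dominating sets take one with the fewest edges. If it contained a
vertex `v` together with an edge `vw`, trading the edge `vw` for the vertex `w` would give a mixed
dominating set that is no larger and has one edge fewer: everything the edge `vw` dominates is
`v`, `w`, or dominated by `v` or by `w`. -/

namespace MixedDomination

open Set

variable {V : Type*} {G : SimpleGraph V}

lemma inr_mem_ground {e : Sym2 V} : Sum.inr e ∈ Ground G ↔ e ∈ G.edgeSet := by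
  simp [Ground]

lemma mixedDom_edge_cases {v w : V} {x : V ⊕ Sym2 V} (h : MixedDom G (Sum.inr s(v, w)) x) :
    x = Sum.inl v ∨ x = Sum.inl w ∨ MixedDom G (Sum.inl v) x ∨ MixedDom G (Sum.inl w) x := by
  cases x with
  | inl u =>
    obtain ⟨-, hu⟩ := h
    rcases Sym2.mem_iff.1 hu with rfl | rfl <;> simp
  | inr f =>
    obtain ⟨-, hf, -, u, hu, huf⟩ := h
    rcases Sym2.mem_iff.1 hu with rfl | rfl
    · exact .inr <| .inr <| .inl ⟨hf, huf⟩
    · exact .inr <| .inr <| .inr ⟨hf, huf⟩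

lemma IsMDS.exchange {S : Set (V ⊕ Sym2 V)} {v w : V} (hS : IsMDS G S)
    (hv : Sum.inl v ∈ S) (he : Sum.inr s(v, w) ∈ S) :
    IsMDS G (insert (Sum.inl w) (S \ {Sum.inr s(v, w)})) := by
  refine ⟨insert_subset (.inl ⟨w, rfl⟩) (sdiff_subset.trans hS.1), ?_⟩
  rintro x ⟨hxG, hxT⟩
  have hvT : Sum.inl v ∈ insert (Sum.inl w) (S \ {Sum.inr s(v, w)}) := .inr ⟨hv, by simp⟩
  by_cases hx : x = Sum.inr s(v, w)
  · exact ⟨_, hvT, hx ▸ ⟨inr_mem_ground.1 (hS.1 he), Sym2.mem_mk_left v w⟩⟩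
  have hxS : x ∉ S := fun h ↦ hxT (.inr ⟨h, hx⟩)
  obtain ⟨s, hs, hsx⟩ := hS.2 x ⟨hxG, hxS⟩
  by_cases hse : s = Sum.inr s(v, w)
  · subst hse
    rcases mixedDom_edge_cases hsx with rfl | rfl | hvx | hwx
    · exact absurd hv hxS
    · exact absurd (mem_insert _ _) hxT
    · exact ⟨_, hvT, hvx⟩
    · exact ⟨_, mem_insert _ _, hwx⟩
  · exact ⟨s, .inr ⟨hs, hse⟩, hsx⟩

lemma ncard_insert_sdiff_singleton_le {α : Type*} {s : Set α} {a b : α} (hb : b ∈ s)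
    (hs : s.Finite := by toFinite_tac) : (insert a (s \ {b})).ncard ≤ s.ncard :=
  (ncard_insert_le a _).trans (ncard_sdiff_singleton_add_one hb hs).le

lemma preimage_inr_insert_inl_sdiff {S : Set (V ⊕ Sym2 V)} {w : V} {e : Sym2 V} :
    Sum.inr ⁻¹' insert (Sum.inl w) (S \ {Sum.inr e}) = Sum.inr ⁻¹' S \ {e} := by
  ext; simp

lemma gammaM_le_ncard {S : Set (V ⊕ Sym2 V)} (hS : IsMDS G S) : gammaM G ≤ S.ncard :=
  Nat.sInf_le ⟨S, hS, rfl⟩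

lemma exists_isMDS_ncard_eq_gammaM (G : SimpleGraph V) :
    ∃ S : Set (V ⊕ Sym2 V), IsMDS G S ∧ S.ncard = gammaM G :=
  Nat.sInf_mem (s := {n | ∃ S, IsMDS G S ∧ S.ncard = n})
    ⟨_, Ground G, ⟨subset_rfl, fun _ hx ↦ absurd hx.1 hx.2⟩, rfl⟩

end MixedDomination

open MixedDomination in
theorem stmt_15_general {V : Type*} [Fintype V] (G : SimpleGraph V) :
    ∃ S : Set (V ⊕ Sym2 V), IsMDS G S ∧ S.ncard = gammaM G ∧
      ∀ (v : V) (e : Sym2 V), Sum.inl v ∈ S → Sum.inr e ∈ S → v ∉ e := by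
  obtain ⟨S, ⟨hS, hcard⟩, hfewest⟩ :=
    Set.exists_min_image {S | IsMDS G S ∧ S.ncard = gammaM G} (fun S ↦ (Sum.inr ⁻¹' S).ncard)
      (Set.toFinite _) (exists_isMDS_ncard_eq_gammaM G)
  refine ⟨S, hS, hcard, fun v e hv he hve ↦ ?_⟩
  obtain ⟨w, rfl⟩ := Sym2.mem_iff_exists.1 hve
  have hS' := hS.exchange hv he
  have hcard' := le_antisymm (hcard ▸ ncard_insert_sdiff_singleton_le he) (gammaM_le_ncard hS')
  have hle := hfewest _ ⟨hS', hcard'⟩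
  rw [preimage_inr_insert_inl_sdiff] at hle
  exact (Set.ncard_sdiff_singleton_lt_of_mem (show s(v, w) ∈ Sum.inr ⁻¹' S from he)).not_ge hle

/-- Every graph has a minimum mixed dominating set in which no chosen vertex is an
endpoint of a chosen edge. -/
theorem stmt_15 {V : Type*} [Fintype V] [DecidableEq V] (G : SimpleGraph V) :
    ∃ S : Set (V ⊕ Sym2 V), IsMDS G S ∧ S.ncard = gammaM G ∧
      ∀ (v : V) (e : Sym2 V), Sum.inl v ∈ S → Sum.inr e ∈ S → v ∉ e :=
  stmt_15_general G
end
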